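/- arXiv:1505.07110 — 3 statements merged into one kernel-verified Lean document; each statement's English description precedes it below -/
import Mathlib

section
/- Let m be a positive integer and q ∈ ℂ with 0 < |q| < 1. If f: ℂ* → ℂ is holomorphic (has no poles) and satisfies f(z) = f(1/z) and f(qz) = q^m z^{2m} f(z) for all z ∈ ℂ*, then f is identically zero. -/
/-!
Iterating the functional equation gives `f (q^k z) = j(k, z)^m f z` for all `k : ℤ`, where
`j(k, z) = q^(k²) z^(2k)`. Every `z ≠ 0` is `q^k w` with `‖q‖ ≤ ‖w‖ ≤ 1`, and there
`‖j(k, w)‖ ≤ ‖q‖⁻¹`, so `f` is bounded on `ℂ*` by `‖q‖^(-m)` times its maximum on that compact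
annulus. By the removable singularity theorem and Liouville, `f` is a constant `c` on `ℂ*`, and
`c = f q = q^m c` forces `c = 0`.
-/

open Set Function Filter Topology

theorem exists_eq_const_of_differentiableOn_compl_singleton_of_norm_le
    {E : Type*} [NormedAddCommGroup E] [NormedSpace ℂ E] [CompleteSpace E] {f : ℂ → E} {c : ℂ}
    (hf : DifferentiableOn ℂ f {c}ᶜ) {C : ℝ} (hC : ∀ z ≠ c, ‖f z‖ ≤ C) :
    ∃ a, ∀ z ≠ c, f z = a := by
  set F := update f c (limUnder (𝓝[≠] c) f)
  have hF : Differentiable ℂ F := by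
    rw [← differentiableOn_univ]
    refine Complex.differentiableOn_update_limUnder_of_bddAbove univ_mem ?_ ⟨C, ?_⟩
    · simpa [compl_eq_univ_sdiff] using hf
    · rintro _ ⟨z, hz, rfl⟩
      exact hC z (by simpa using hz)
  have hF_bdd : Bornology.IsBounded (range F) := by
    refine isBounded_iff_forall_norm_le.2 ⟨max C ‖F c‖, ?_⟩
    rintro _ ⟨z, rfl⟩
    rcases eq_or_ne z c with rfl | hz
    · exact le_max_right _ _
    · simpa [F, update_of_ne hz] using le_max_of_le_left (hC z hz)
  obtain ⟨a, ha⟩ := hF.exists_const_forall_eq_of_bounded hF_bdd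
  exact ⟨a, fun z hz => by simpa [F, update_of_ne hz] using ha z⟩

noncomputable def thetaFactor (q : ℂ) (k : ℤ) (z : ℂ) : ℂ := q ^ (k ^ 2) * z ^ (2 * k)

theorem thetaFactor_add_one {q z : ℂ} (hq : q ≠ 0) (hz : z ≠ 0) (k : ℤ) :
    thetaFactor q (k + 1) z = q * (q ^ k * z) ^ 2 * thetaFactor q k z := by
  simp only [thetaFactor, add_sq, mul_add, zpow_add₀ hq, zpow_add₀ hz, zpow_mul', mul_pow,
    mul_one, one_pow, zpow_ofNat]
  ring

theorem apply_zpow_mul_eq_thetaFactor_pow_mul {q : ℂ} (hq : q ≠ 0) {m : ℕ} {f : ℂ → ℂ}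
    (hf : ∀ z ≠ 0, f (q * z) = (q * z ^ 2) ^ m * f z) (k : ℤ) {z : ℂ} (hz : z ≠ 0) :
    f (q ^ k * z) = thetaFactor q k z ^ m * f z := by
  have step (j : ℤ) : f (q ^ (j + 1) * z) = thetaFactor q (j + 1) z ^ m * f z ↔
      f (q ^ j * z) = thetaFactor q j z ^ m * f z := by
    have hw : q ^ j * z ≠ 0 := mul_ne_zero (zpow_ne_zero j hq) hz
    rw [zpow_add_one₀ hq, mul_right_comm, mul_comm _ q, hf _ hw, thetaFactor_add_one hq hz,
      mul_pow _ (thetaFactor q j z), mul_assoc]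
    exact mul_right_inj' (pow_ne_zero _ (mul_ne_zero hq (pow_ne_zero 2 hw)))
  induction k using Int.induction_on with
  | zero => simp [thetaFactor]
  | succ i ih => exact (step i).2 ih
  | pred i ih => exact (step (-i - 1)).1 (by simpa using ih)

theorem norm_thetaFactor_le {q w : ℂ} (hq : 0 < ‖q‖) (hqw : ‖q‖ ≤ ‖w‖) (hw : ‖w‖ ≤ 1) (k : ℤ) :
    ‖thetaFactor q k w‖ ≤ ‖q‖⁻¹ := by
  rw [thetaFactor, norm_mul, norm_zpow, norm_zpow]
  have hq1 : ‖q‖ ≤ 1 := hqw.trans hw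
  rcases le_or_gt 0 k with hk | hk
  · calc ‖q‖ ^ k ^ 2 * ‖w‖ ^ (2 * k) ≤ 1 * 1 := by
          gcongr
          · exact zpow_le_one₀ hq hq1 (sq_nonneg k)
          · exact zpow_le_one₀ (hq.trans_le hqw) hw (by positivity)
      _ ≤ ‖q‖⁻¹ := by rw [mul_one]; exact (one_le_inv₀ hq).2 hq1
  · have hw_le : ‖w‖ ^ (2 * k) ≤ ‖q‖ ^ (2 * k) := by
      have := zpow_le_zpow_left₀ (by omega : (0 : ℤ) ≤ -(2 * k)) hq.le hqw
      simpa only [zpow_neg, inv_inv] using inv_anti₀ (by positivity) this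
    calc ‖q‖ ^ k ^ 2 * ‖w‖ ^ (2 * k) ≤ ‖q‖ ^ k ^ 2 * ‖q‖ ^ (2 * k) := by gcongr
      _ = ‖q‖ ^ ((k + 1) ^ 2) * ‖q‖⁻¹ := by
          rw [← zpow_add₀ hq.ne', ← zpow_neg_one, ← zpow_add₀ hq.ne']
          ring_nf
      _ ≤ ‖q‖⁻¹ := mul_le_of_le_one_left (by positivity) (zpow_le_one₀ hq hq1 (sq_nonneg _))

theorem exists_eq_zpow_mul_norm_mem_Icc {q : ℂ} (hq0 : 0 < ‖q‖) (hq1 : ‖q‖ < 1) {z : ℂ}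
    (hz : z ≠ 0) : ∃ (k : ℤ) (w : ℂ), ‖w‖ ∈ Icc ‖q‖ 1 ∧ z = q ^ k * w := by
  have hz0 : 0 < ‖z‖ := norm_pos_iff.2 hz
  obtain ⟨k, hk⟩ := exists_mem_Ico_zpow (inv_pos.2 hz0) ((one_lt_inv₀ hq0).2 hq1)
  rw [mem_Ico, inv_zpow, inv_zpow, inv_le_inv₀ (zpow_pos hq0 _) hz0,
    inv_lt_inv₀ hz0 (zpow_pos hq0 _), zpow_add_one₀ hq0.ne'] at hk
  have hqk : 0 < ‖q‖ ^ k := zpow_pos hq0 k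
  refine ⟨k, z / q ^ k, ⟨?_, ?_⟩, (mul_div_cancel₀ z (zpow_ne_zero k (norm_pos_iff.1 hq0))).symm⟩
  · rw [norm_div, norm_zpow, le_div_iff₀ hqk, mul_comm]
    exact hk.2.le
  · rw [norm_div, norm_zpow, div_le_one hqk]
    exact hk.1

theorem exists_norm_le_of_apply_mul_eq_mul_sq_pow_mul {q : ℂ} (hq0 : 0 < ‖q‖) (hq1 : ‖q‖ < 1)
    {m : ℕ} {f : ℂ → ℂ} (hf : ContinuousOn f {0}ᶜ)
    (hfq : ∀ z ≠ 0, f (q * z) = (q * z ^ 2) ^ m * f z) :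
    ∃ C, ∀ z ≠ 0, ‖f z‖ ≤ C := by
  set K : Set ℂ := Metric.closedBall 0 1 ∩ {w | ‖q‖ ≤ ‖w‖}
  have hK : IsCompact K :=
    (isCompact_closedBall 0 1).inter_right (isClosed_le continuous_const continuous_norm)
  have hK0 : K ⊆ {0}ᶜ := fun w hw h0 =>
    hq0.not_ge (by simpa [mem_singleton_iff.1 h0] using hw.2)
  obtain ⟨M, hM⟩ := hK.exists_bound_of_continuousOn (hf.mono hK0)
  refine ⟨‖q‖⁻¹ ^ m * M, fun z hz => ?_⟩
  obtain ⟨k, w, ⟨hqw, hw1⟩, rfl⟩ := exists_eq_zpow_mul_norm_mem_Icc hq0 hq1 hz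
  have hw0 : w ≠ 0 := right_ne_zero_of_mul hz
  rw [apply_zpow_mul_eq_thetaFactor_pow_mul (norm_pos_iff.1 hq0) hfq k hw0, norm_mul, norm_pow]
  exact mul_le_mul (pow_le_pow_left₀ (norm_nonneg _) (norm_thetaFactor_le hq0 hqw hw1 k) m)
    (hM w ⟨mem_closedBall_zero_iff.2 hw1, hqw⟩) (norm_nonneg _) (by positivity)

theorem holomorphic_section_negative_degree_vanishes_general (m : ℕ) (hm : 0 < m) (q : ℂ)
    (hq0 : 0 < ‖q‖) (hq1 : ‖q‖ < 1) (f : ℂ → ℂ)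
    (hf : DifferentiableOn ℂ f {z : ℂ | z ≠ 0})
    (hqp : ∀ z : ℂ, z ≠ 0 → f (q * z) = q ^ m * z ^ (2 * m) * f z) :
    ∀ z : ℂ, z ≠ 0 → f z = 0 := by
  have hfq : ∀ z ≠ 0, f (q * z) = (q * z ^ 2) ^ m * f z := fun z hz => by
    rw [hqp z hz, mul_pow, ← pow_mul]
  obtain ⟨C, hC⟩ := exists_norm_le_of_apply_mul_eq_mul_sq_pow_mul hq0 hq1 hf.continuousOn hfq
  obtain ⟨c, hc⟩ := exists_eq_const_of_differentiableOn_compl_singleton_of_norm_le hf hC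
  have hqm : q ^ m ≠ 1 := fun h => by
    simpa [← norm_pow, h] using pow_lt_one₀ (norm_nonneg q) hq1 hm.ne'
  have hc0 : c = 0 := by
    have h := hqp 1 one_ne_zero
    rw [mul_one, hc q (norm_pos_iff.1 hq0), hc 1 one_ne_zero, one_pow, mul_one] at h
    exact (mul_eq_zero.1 (by linear_combination h : (1 - q ^ m) * c = 0)).resolve_left
      (sub_ne_zero.2 (Ne.symm hqm))
  intro z hz
  rw [hc z hz, hc0]

/-- Let `m` be a positive integer and `q ∈ ℂ` with `0 < |q| < 1`.  If `f : ℂ* → ℂ` is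
holomorphic (has no poles) and satisfies `f(z) = f(1/z)` and `f(qz) = q^m z^{2m} f(z)`
for all `z ∈ ℂ*`, then `f` is identically zero.  (A holomorphic symmetric section of the
line bundle `L^{-m}` over the elliptic curve `ℂ*/q^ℤ` vanishes.) -/
theorem holomorphic_section_negative_degree_vanishes (m : ℕ) (hm : 0 < m) (q : ℂ)
    (hq0 : 0 < ‖q‖) (hq1 : ‖q‖ < 1) (f : ℂ → ℂ)
    (hf : DifferentiableOn ℂ f {z : ℂ | z ≠ 0})
    (hsym : ∀ z : ℂ, z ≠ 0 → f z⁻¹ = f z)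
    (hqp : ∀ z : ℂ, z ≠ 0 → f (q * z) = q ^ m * z ^ (2 * m) * f z) :
    ∀ z : ℂ, z ≠ 0 → f z = 0 :=
  holomorphic_section_negative_degree_vanishes_general m hm q hq0 hq1 f hf hqp
end

section
/- Let q ∈ ℂ with 0 < |q| < 1 and let f, g: ℂ* → ℂ be meromorphic functions both satisfying h(z) = h(1/z) and h(qz) = q^m z^{2m} h(z) for a fixed positive integer m. If f and g have the same poles with the same principal parts (i.e. f − g is holomorphic on ℂ*), then f = g. -/
/-!
The difference `h = f - g` is holomorphic on `ℂ*` and iterating its functional equation gives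
`h (q ^ n * z) = q ^ (m n²) z ^ (2 m n) h z`. Hence on both circles `‖z‖ = ‖q‖ ^ (± n)` it is
bounded by `‖q‖ ^ (m n²)` times its maximum on the unit circle. By the maximum modulus principle
the same bound holds on the annulus between them, which contains any given `z` for large `n`;
letting `n → ∞` gives `h z = 0`.
-/

open Filter Set Topology

namespace Complex

variable {F : Type*} [NormedAddCommGroup F] [NormedSpace ℂ F]

theorem norm_le_on_annulus_of_norm_le_on_boundary {f : ℂ → F} {r R C : ℝ}
    (hf : DifferentiableOn ℂ f {z | ‖z‖ ∈ Icc r R})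
    (hC : ∀ z : ℂ, ‖z‖ = r ∨ ‖z‖ = R → ‖f z‖ ≤ C) {z : ℂ} (hz : ‖z‖ ∈ Ioo r R) :
    ‖f z‖ ≤ C := by
  have hrR : r < R := hz.1.trans hz.2
  have hclosure : closure {w : ℂ | ‖w‖ ∈ Ioo r R} ⊆ {w | ‖w‖ ∈ Icc r R} := by
    have := (continuous_norm (E := ℂ)).closure_preimage_subset (Ioo r R)
    rwa [closure_Ioo hrR.ne] at this
  have hbdd : Bornology.IsBounded {w : ℂ | ‖w‖ ∈ Ioo r R} :=
    Metric.isBounded_closedBall.subset fun w hw => mem_closedBall_zero_iff.2 hw.2.le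
  refine norm_le_of_forall_mem_frontier_norm_le hbdd (hf.mono hclosure).diffContOnCl
    (fun w hw => hC w ?_) (subset_closure hz)
  simpa [frontier_Ioo hrR] using continuous_norm.frontier_preimage_subset (Ioo r R) hw

end Complex

theorem eventually_mem_Ioo_pow_inv_pow {a x : ℝ} (ha0 : 0 < a) (ha1 : a < 1) (hx : 0 < x) :
    ∀ᶠ n : ℕ in atTop, x ∈ Ioo (a ^ n) (a ^ n)⁻¹ := by
  filter_upwards [(tendsto_pow_atTop_nhds_zero_of_lt_one ha0.le ha1).eventually_lt_const
    (lt_min hx (inv_pos.2 hx))] with n hn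
  exact ⟨hn.trans_le (min_le_left _ _),
    (lt_inv_comm₀ hx (pow_pos ha0 n)).2 (hn.trans_le (min_le_right _ _))⟩

def QuasiPeriodic (q : ℂ) (m : ℕ) (h : ℂ → ℂ) : Prop :=
  ∀ z : ℂ, z ≠ 0 → h (q * z) = q ^ m * z ^ (2 * m) * h z

namespace QuasiPeriodic

variable {q : ℂ} {m : ℕ} {f g h : ℂ → ℂ}

theorem sub (hf : QuasiPeriodic q m f) (hg : QuasiPeriodic q m g) :
    QuasiPeriodic q m (f - g) := fun z hz => by
  simp only [Pi.sub_apply, hf z hz, hg z hz]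
  ring

theorem apply_pow_mul (hh : QuasiPeriodic q m h) (hq : q ≠ 0) (n : ℕ) {z : ℂ} (hz : z ≠ 0) :
    h (q ^ n * z) = q ^ (m * n ^ 2) * z ^ (2 * m * n) * h z := by
  induction n with
  | zero => simp
  | succ n ih =>
    rw [pow_succ', mul_assoc, hh _ (mul_ne_zero (pow_ne_zero n hq) hz), ih]
    ring

theorem norm_eq_of_norm_eq_pow (hh : QuasiPeriodic q m h) (hq : q ≠ 0) (n : ℕ) {w : ℂ}
    (hw : ‖w‖ = ‖q‖ ^ n) : ‖h w‖ = ‖q‖ ^ (m * n ^ 2) * ‖h ((q ^ n)⁻¹ * w)‖ := by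
  have hqn : q ^ n ≠ 0 := pow_ne_zero n hq
  have hz : ‖(q ^ n)⁻¹ * w‖ = 1 := by
    rw [norm_mul, norm_inv, norm_pow, hw, inv_mul_cancel₀ (by simpa using hqn)]
  conv_lhs => rw [← mul_inv_cancel_left₀ hqn w]
  rw [hh.apply_pow_mul hq n (norm_ne_zero_iff.1 (by rw [hz]; exact one_ne_zero)), norm_mul,
    norm_mul, norm_pow, norm_pow, hz, one_pow, mul_one]

theorem norm_eq_of_norm_eq_inv_pow (hh : QuasiPeriodic q m h) (hq : q ≠ 0) (n : ℕ) {w : ℂ}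
    (hw : ‖w‖ = (‖q‖ ^ n)⁻¹) : ‖h w‖ = ‖q‖ ^ (m * n ^ 2) * ‖h (q ^ n * w)‖ := by
  have hq' : 0 < ‖q‖ := norm_pos_iff.2 hq
  have hw0 : w ≠ 0 := norm_ne_zero_iff.1 (by rw [hw]; positivity)
  have hpow : ‖w‖ ^ (2 * m * n) = (‖q‖ ^ (m * n ^ 2))⁻¹ ^ 2 := by
    rw [hw, inv_pow, inv_pow, ← pow_mul, ← pow_mul]
    ring_nf
  rw [hh.apply_pow_mul hq n hw0, norm_mul, norm_mul, norm_pow, norm_pow, hpow]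
  field_simp

theorem norm_le_of_norm_eq_pow_or_inv_pow (hh : QuasiPeriodic q m h) (hq : q ≠ 0) {M : ℝ}
    (hM : ∀ z : ℂ, ‖z‖ = 1 → ‖h z‖ ≤ M) (n : ℕ) {w : ℂ}
    (hw : ‖w‖ = ‖q‖ ^ n ∨ ‖w‖ = (‖q‖ ^ n)⁻¹) : ‖h w‖ ≤ ‖q‖ ^ (m * n ^ 2) * M := by
  have hq' : 0 < ‖q‖ := norm_pos_iff.2 hq
  rcases hw with hw | hw
  · rw [hh.norm_eq_of_norm_eq_pow hq n hw]
    gcongr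
    refine hM _ ?_
    rw [norm_mul, norm_inv, norm_pow, hw, inv_mul_cancel₀ (by positivity)]
  · rw [hh.norm_eq_of_norm_eq_inv_pow hq n hw]
    gcongr
    refine hM _ ?_
    rw [norm_mul, norm_pow, hw, mul_inv_cancel₀ (by positivity)]

theorem eq_zero (hh : QuasiPeriodic q m h) (hm : 0 < m) (hq0 : q ≠ 0) (hq1 : ‖q‖ < 1)
    (hd : DifferentiableOn ℂ h {z | z ≠ 0}) {z : ℂ} (hz : z ≠ 0) : h z = 0 := by
  have hq' : 0 < ‖q‖ := norm_pos_iff.2 hq0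
  obtain ⟨M, hM⟩ := (isCompact_sphere (0 : ℂ) 1).exists_bound_of_continuousOn
    (hd.continuousOn.mono fun w hw => ne_zero_of_mem_unit_sphere ⟨w, hw⟩)
  have hbound : ∀ᶠ n : ℕ in atTop, ‖h z‖ ≤ ‖q‖ ^ (m * n ^ 2) * M := by
    filter_upwards [eventually_mem_Ioo_pow_inv_pow hq' hq1 (norm_pos_iff.2 hz)] with n hn
    have hM' : ∀ w : ℂ, ‖w‖ = 1 → ‖h w‖ ≤ M := fun w hw => hM w (by simpa using hw)
    refine Complex.norm_le_on_annulus_of_norm_le_on_boundary (hd.mono fun w hw => ?_)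
      (fun w hw => hh.norm_le_of_norm_eq_pow_or_inv_pow hq0 hM' n hw) hn
    exact norm_ne_zero_iff.1 (hw.1.trans_lt' (pow_pos hq' n)).ne'
  have hlim : Tendsto (fun n : ℕ => ‖q‖ ^ (m * n ^ 2) * M) atTop (𝓝 0) := by
    have hexp : Tendsto (fun n : ℕ => m * n ^ 2) atTop atTop :=
      tendsto_atTop_mono (fun n => (Nat.le_self_pow two_ne_zero n).trans
        (Nat.le_mul_of_pos_left _ hm)) tendsto_id
    simpa using ((tendsto_pow_atTop_nhds_zero_of_lt_one hq'.le hq1).comp hexp).mul_const M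
  exact norm_le_zero_iff.1 (ge_of_tendsto hlim hbound)

end QuasiPeriodic

theorem meromorphic_sections_eq_of_sub_holomorphic_general (m : ℕ) (hm : 0 < m) (q : ℂ)
    (hq0 : 0 < ‖q‖) (hq1 : ‖q‖ < 1) (f g : ℂ → ℂ)
    (hfqp : ∀ z : ℂ, z ≠ 0 → f (q * z) = q ^ m * z ^ (2 * m) * f z)
    (hgqp : ∀ z : ℂ, z ≠ 0 → g (q * z) = q ^ m * z ^ (2 * m) * g z)
    (hdiff : DifferentiableOn ℂ (fun z => f z - g z) {z : ℂ | z ≠ 0}) :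
    ∀ z : ℂ, z ≠ 0 → f z = g z := fun _ hz =>
  sub_eq_zero.1 ((QuasiPeriodic.sub hfqp hgqp).eq_zero hm (norm_pos_iff.1 hq0) hq1 hdiff hz)

/-- Let `0 < |q| < 1` and let `f, g : ℂ* → ℂ` be meromorphic functions both satisfying
`h(z) = h(1/z)` and `h(qz) = q^m z^{2m} h(z)` for a fixed positive integer `m`.  If `f` and
`g` have the same poles with the same principal parts, i.e. `f - g` is holomorphic on `ℂ*`,
then `f = g` on `ℂ*`. -/
theorem meromorphic_sections_eq_of_sub_holomorphic (m : ℕ) (hm : 0 < m) (q : ℂ)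
    (hq0 : 0 < ‖q‖) (hq1 : ‖q‖ < 1) (f g : ℂ → ℂ)
    (hf : MeromorphicOn f {z : ℂ | z ≠ 0})
    (hg : MeromorphicOn g {z : ℂ | z ≠ 0})
    (hfsym : ∀ z : ℂ, z ≠ 0 → f z⁻¹ = f z)
    (hfqp : ∀ z : ℂ, z ≠ 0 → f (q * z) = q ^ m * z ^ (2 * m) * f z)
    (hgsym : ∀ z : ℂ, z ≠ 0 → g z⁻¹ = g z)
    (hgqp : ∀ z : ℂ, z ≠ 0 → g (q * z) = q ^ m * z ^ (2 * m) * g z)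
    (hdiff : DifferentiableOn ℂ (fun z => f z - g z) {z : ℂ | z ≠ 0}) :
    ∀ z : ℂ, z ≠ 0 → f z = g z :=
  meromorphic_sections_eq_of_sub_holomorphic_general m hm q hq0 hq1 f g hfqp hgqp hdiff
end

section
/- Let 0<|q|<1 and define the kernel K(a,ξ;x) := θ(q x^{-2};q) / ∏_{i,j=1,2} θ(x aᵢ/ξⱼ;q) for SU(2) fugacities a=(a₁,a₂)=(a,1/a), ξ=(ξ₁,ξ₂)=(ξ,1/ξ). Then K satisfies the ellipticity condition in ξ: K(a, (qξ, 1/(qξ)); x) = K(a, (ξ,1/ξ); x), when combined with the SU(2) vector multiplet measure factor (q;q)²θ(ξ²;q)θ(ξ^{-2};q); i.e. the integrand I_V(ξ)·K(a,ξ⁻¹;x)·K(ξ,b⁻¹;y) is invariant under ξ ↦ qξ. -/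
/-- The q-Pochhammer symbol `(x;q)_∞ = ∏_{i=0}^∞ (1 - x q^i)`. -/
noncomputable def qPoch (x q : ℂ) : ℂ := ∏' n : ℕ, (1 - x * q ^ n)

/-- The q-theta function `θ(x;q) = (x;q)_∞ (q/x;q)_∞`. -/
noncomputable def qTheta (x q : ℂ) : ℂ := qPoch x q * qPoch (q / x) q

/-- The Landau–Ginzburg block kernel `K(a,ξ;x) = θ(q x⁻²;q)/∏_{i,j} θ(x aᵢ/ξⱼ;q)` with
`SU(2)` fugacities `a = (a, 1/a)`, `ξ = (ξ, 1/ξ)`. -/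
noncomputable def Kblock (q x a ξ : ℂ) : ℂ :=
  qTheta (q / x ^ 2) q /
    (qTheta (x * a / ξ) q * qTheta (x * a * ξ) q *
      qTheta (x / (a * ξ)) q * qTheta (x * ξ / a) q)

/-- The `(0,2)` `SU(2)` vector multiplet index `I_V(ξ) = (q;q)² θ(ξ²;q) θ(ξ⁻²;q)`. -/
noncomputable def IVsu2 (q ξ : ℂ) : ℂ :=
  (qPoch q q) ^ 2 * qTheta (ξ ^ 2) q * qTheta (ξ⁻¹ ^ 2) q

/-!
The theta function is quasi-periodic, `θ(qz) = -z⁻¹ θ(z)`, because shifting `x ↦ qx` in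
`(x;q)_∞` only peels off the factor `1 - x`. Under `ξ ↦ qξ` two of the four denominator factors
of a kernel shift up and two shift down, so each kernel picks up `q² ξ⁴`, while
`θ(ξ²) θ(ξ⁻²)` picks up `(q⁴ ξ⁸)⁻¹`: the factors cancel, which is the vanishing of the gauge
anomaly. Since the kernel is invariant under `ξ ↦ ξ⁻¹` and under exchanging its two `SU(2)`
fugacities, one computation covers both kernels.
-/

lemma multipliable_one_sub_mul_pow (x : ℂ) {q : ℂ} (hq : ‖q‖ < 1) :
    Multipliable fun n : ℕ => 1 - x * q ^ n := by
  simpa only [sub_eq_add_neg] using multipliable_one_add_of_summable (f := fun n => -(x * q ^ n))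
    (by simpa only [norm_neg, norm_mul, norm_pow] using
      (summable_geometric_of_lt_one (norm_nonneg q) hq).mul_left ‖x‖)

lemma qPoch_eq_one_sub_mul_qPoch_mul (x : ℂ) {q : ℂ} (hq : ‖q‖ < 1) :
    qPoch x q = (1 - x) * qPoch (q * x) q := by
  have hshift : (fun n : ℕ => 1 - x * q ^ (n + 1)) = fun n => 1 - q * x * q ^ n := by
    funext n; ring
  rw [qPoch, tprod_eq_zero_mul' (hshift ▸ multipliable_one_sub_mul_pow (q * x) hq), hshift,
    pow_zero, mul_one, qPoch]

section QuasiPeriodicity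

variable {x q : ℂ} (hx : x ≠ 0) (hq0 : q ≠ 0) (hq : ‖q‖ < 1)
include hx hq0 hq

lemma qTheta_mul_left : qTheta (q * x) q = -x⁻¹ * qTheta x q := by
  rw [qTheta, qTheta, show q / (q * x) = x⁻¹ by field_simp, div_eq_mul_inv,
    qPoch_eq_one_sub_mul_qPoch_mul x⁻¹ hq, qPoch_eq_one_sub_mul_qPoch_mul x hq]
  field_simp
  ring

lemma qTheta_div_right : qTheta (x / q) q = -(x / q) * qTheta x q := by
  have h := qTheta_mul_left (div_ne_zero hx hq0) hq0 hq
  rw [mul_div_cancel₀ x hq0] at h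
  rw [h, ← mul_assoc, neg_mul_neg, mul_inv_cancel₀ (div_ne_zero hx hq0), one_mul]

end QuasiPeriodicity

lemma Kblock_inv (q x a ξ : ℂ) : Kblock q x a ξ⁻¹ = Kblock q x a ξ := by
  unfold Kblock
  simp only [div_eq_mul_inv, mul_inv, inv_inv]
  ring_nf

lemma Kblock_comm (q x a ξ : ℂ) : Kblock q x a ξ = Kblock q x ξ a := by
  unfold Kblock
  ring_nf

section Ellipticity

variable {q : ℂ} (hq0 : q ≠ 0) (hq : ‖q‖ < 1)
include hq0 hq

lemma Kblock_mul_left {x a ξ : ℂ} (hx : x ≠ 0) (ha : a ≠ 0) (hξ : ξ ≠ 0) :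
    Kblock q x a (q * ξ) = q ^ 2 * ξ ^ 4 * Kblock q x a ξ := by
  have hden : qTheta (x * a / (q * ξ)) q * qTheta (x * a * (q * ξ)) q *
        qTheta (x / (a * (q * ξ))) q * qTheta (x * (q * ξ) / a) q =
      (q ^ 2 * ξ ^ 4)⁻¹ * (qTheta (x * a / ξ) q * qTheta (x * a * ξ) q *
        qTheta (x / (a * ξ)) q * qTheta (x * ξ / a) q) := by
    rw [show x * a / (q * ξ) = x * a / ξ / q by ring,
      show x * a * (q * ξ) = q * (x * a * ξ) by ring, show x / (a * (q * ξ)) = x / (a * ξ) / q by ring,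
      show x * (q * ξ) / a = q * (x * ξ / a) by ring,
      qTheta_div_right (by positivity) hq0 hq, qTheta_mul_left (by positivity) hq0 hq,
      qTheta_div_right (by positivity) hq0 hq, qTheta_mul_left (by positivity) hq0 hq]
    field_simp
  rw [Kblock, Kblock, hden]
  simp only [div_eq_mul_inv, mul_inv, inv_inv]
  ring

lemma IVsu2_mul_left {ξ : ℂ} (hξ : ξ ≠ 0) :
    IVsu2 q (q * ξ) = (q ^ 4 * ξ ^ 8)⁻¹ * IVsu2 q ξ := by
  rw [IVsu2, IVsu2, show (q * ξ) ^ 2 = q * (q * ξ ^ 2) by ring,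
    show (q * ξ)⁻¹ ^ 2 = ξ⁻¹ ^ 2 / q / q by ring,
    qTheta_mul_left (by positivity) hq0 hq, qTheta_mul_left (by positivity) hq0 hq,
    qTheta_div_right (by positivity) hq0 hq, qTheta_div_right (by positivity) hq0 hq]
  field_simp

end Ellipticity

/-- Ellipticity of the gauge-fugacity integrand: the combination
`I_V(ξ)·K(a,ξ⁻¹;x)·K(ξ,b⁻¹;y)` is invariant under `ξ ↦ qξ` (this expresses the
cancellation of the `SU(2)` gauge anomaly and makes the Jeffrey–Kirwan contour integral
well-defined on the elliptic curve `ℂ*/q^ℤ`). -/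
theorem integrand_elliptic (q x y a b ξ : ℂ)
    (hq0 : 0 < ‖q‖) (hq1 : ‖q‖ < 1)
    (hx : x ≠ 0) (hy : y ≠ 0) (ha : a ≠ 0) (hb : b ≠ 0) (hξ : ξ ≠ 0) :
    IVsu2 q (q * ξ) * Kblock q x a (q * ξ)⁻¹ * Kblock q y (q * ξ) b⁻¹
      = IVsu2 q ξ * Kblock q x a ξ⁻¹ * Kblock q y ξ b⁻¹ := by
  have hq : q ≠ 0 := norm_pos_iff.mp hq0
  simp only [Kblock_inv]
  rw [Kblock_comm q y, Kblock_comm q y ξ, IVsu2_mul_left hq hq1 hξ,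
    Kblock_mul_left hq hq1 hx ha hξ, Kblock_mul_left hq hq1 hy hb hξ]
  field_simp
end
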